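/- Suppose r_1, r_2, …, r_n ∈ ℚ[G] satisfy r_i P_i ∈ ℤ[G] for every i, and r_i(e − p_j) − r_j(e − p_i) ∈ ℤ[G] for all i, j = 1, 2, …, n. Then there exists x ∈ ℚ[G] such that r_i − x(e − p_i) ∈ ℤ[G] for all i = 1, 2, …, n. -/

import Mathlib

/-!
Reducing coefficients modulo `ℤ` turns each `rᵢ` into a function `dᵢ : G → ℚ/ℤ`, and right
multiplication by `e - pᵢ` into the difference operator `x ↦ x(g) - x(g pᵢ⁻¹)`. The hypotheses
say that every `dᵢ` sums to zero along each `pᵢ`-orbit and that the family `(dᵢ)` is curl free;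
the claim is that it has a potential `x`.

For a single generator the potential is the partial sum of `d` along each orbit, starting from a
chosen point of the orbit; it closes up because the full orbit sum vanishes. In general, subtract
the potential of the last component: the corrected family is still curl free and its last member
vanishes, so all other members are invariant under the last generator and descend to the quotient
by it. There the images of the remaining generators are still independent, with the same orders,
and induction on the number of generators applies.
-/

open MonoidAlgebra Finset

/-- The integral group ring ℤ[G]. -/
noncomputable abbrev ZG (G : Type) [CommGroup G] := MonoidAlgebra ℤ G

/-- The rational group ring ℚ[G]. -/
noncomputable abbrev QG (G : Type) [CommGroup G] := MonoidAlgebra ℚ G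

/-- The canonical embedding ℤ[G] → ℚ[G]. -/
noncomputable def toQ (G : Type) [CommGroup G] : ZG G →ₐ[ℤ] QG G :=
  MonoidAlgebra.lift ℤ (QG G) G (MonoidAlgebra.of ℚ G)

/-- "x ∈ ℤ[G]" for an element x of ℚ[G]. -/
def MemZG (G : Type) [CommGroup G] (x : QG G) : Prop := ∃ z : ZG G, toQ G z = x

/-- G = ℤ_{m₁} × ℤ_{m₂} × ⋯ × ℤ_{mₙ}, written multiplicatively. -/
abbrev Gr {n : ℕ} (m : Fin n → ℕ) : Type := (i : Fin n) → Multiplicative (ZMod (m i))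

/-- pᵢ, the generator of the i-th factor of G. -/
def pgen {n : ℕ} (m : Fin n → ℕ) (i : Fin n) : Gr m :=
  Pi.mulSingle i (Multiplicative.ofAdd 1)

/-- Pᵢ = e + pᵢ + pᵢ² + ⋯ + pᵢ^{mᵢ−1} ∈ ℤ[G]. -/
noncomputable def Pel {n : ℕ} (m : Fin n → ℕ) (i : Fin n) : ZG (Gr m) :=
  ∑ k ∈ Finset.range (m i), (MonoidAlgebra.of ℤ (Gr m) (pgen m i)) ^ k

/-- Qᵢ = ∏_{j ≠ i} Pⱼ ∈ ℤ[G]. -/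
noncomputable def Qel {n : ℕ} (m : Fin n → ℕ) (i : Fin n) : ZG (Gr m) :=
  ∏ j ∈ Finset.univ.erase i, Pel m j

/-- N = Σ_{g ∈ G} g ∈ ℤ[G]. -/
noncomputable def Nel {n : ℕ} (m : Fin n → ℕ) [∀ i, NeZero (m i)] : ZG (Gr m) :=
  ∑ g : Gr m, MonoidAlgebra.of ℤ (Gr m) g

section Potentials

variable {G A : Type*} [CommGroup G] [AddCommGroup A]

theorem exists_sub_eq_of_sum_orbit_eq_zero {e : G} (he : IsOfFinOrder e) {d : G → A}
    (hd : ∀ g, ∑ k ∈ range (orderOf e), d (g * e ^ k) = 0) :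
    ∃ b : G → A, ∀ g, d g = b (g * e) - b g := by
  -- `B s t` is the potential at `s * e ^ t` relative to the base point `s`; by `hd` it only
  -- depends on `s * e ^ t`.
  set B : G → ℕ → A := fun s t => ∑ j ∈ range t, d (s * e ^ j)
  have hB : ∀ s t t', s * e ^ t = s * e ^ t' → B s t = B s t' := by
    intro s t t' h
    have hper : Function.Periodic (B s) (orderOf e) := fun t => by
      simp only [B, Finset.sum_range_add, pow_add, ← mul_assoc, hd, add_zero]
    rw [← hper.map_mod_nat, ← hper.map_mod_nat t', pow_eq_pow_iff_modEq.mp (mul_left_cancel h)]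
  let s : G → G := fun g => (g : G ⧸ Subgroup.zpowers e).out
  have hs : ∀ g, ∃ t : ℕ, g = s g * e ^ t := by
    intro g
    obtain ⟨⟨h, hh⟩, hgh⟩ := QuotientGroup.mk_out_eq_mul (Subgroup.zpowers e) g
    obtain ⟨t, ht⟩ := he.mem_powers_iff_mem_zpowers.mpr (inv_mem hh)
    exact ⟨t, by simp [s, hgh, ht]⟩
  choose t ht using hs
  refine ⟨fun g => B (s g) (t g), fun g => ?_⟩
  have hsg : s (g * e) = s g := by
    simp only [s, QuotientGroup.mk_mul_of_mem g (Subgroup.mem_zpowers e)]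
  have hshift : B (s (g * e)) (t (g * e)) = B (s g) (t g + 1) := by
    have hge : s g * e ^ t (g * e) = g * e := by rw [← hsg]; exact (ht _).symm
    rw [hsg, hB (s g) (t (g * e)) (t g + 1) (by rw [hge, pow_succ, ← mul_assoc, ← ht g])]
  show d g = B (s (g * e)) (t (g * e)) - B (s g) (t g)
  rw [hshift]
  simp only [B, Finset.sum_range_succ, ← ht]
  abel

theorem apply_out_eq_of_apply_mul_eq {β : Type*} {e : G} (he : IsOfFinOrder e) {f : G → β}
    (hf : ∀ g, f (g * e) = f g) (g : G) : f (g : G ⧸ Subgroup.zpowers e).out = f g := by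
  obtain ⟨⟨h, hh⟩, hgh⟩ := QuotientGroup.mk_out_eq_mul (Subgroup.zpowers e) g
  obtain ⟨t, rfl⟩ := he.mem_powers_iff_mem_zpowers.mpr hh
  have hpow : ∀ t : ℕ, f (g * e ^ t) = f g := fun t => by
    induction t with
    | zero => simp
    | succ t ih => rw [pow_succ, ← mul_assoc, hf, ih]
  rw [hgh, hpow]

section Independence

variable {ι : Type*} [Fintype ι]

/-- The subgroups generated by the `e i` form an internal direct product. -/
def ZPowIndependent (e : ι → G) : Prop :=
  ∀ k : ι → ℤ, ∏ i, e i ^ k i = 1 → ∀ i, e i ^ k i = 1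

theorem ZPowIndependent.inv {e : ι → G} (h : ZPowIndependent e) :
    ZPowIndependent fun i => (e i)⁻¹ := by
  intro k hk i
  simp only [inv_zpow'] at hk ⊢
  exact h (-k) hk i

variable {n : ℕ} {e : Fin (n + 1) → G}

theorem ZPowIndependent.zpow_eq_one_of_prod_mem_zpowers_last (hindep : ZPowIndependent e)
    {k : Fin n → ℤ} (hk : ∏ i, e i.castSucc ^ k i ∈ Subgroup.zpowers (e (Fin.last n)))
    (i : Fin n) : e i.castSucc ^ k i = 1 := by
  obtain ⟨t, ht⟩ := Subgroup.mem_zpowers_iff.mp hk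
  simpa using hindep (Fin.snoc k (-t)) (by simp [Fin.prod_univ_castSucc, ht, zpow_neg]) i.castSucc

theorem ZPowIndependent.mk_castSucc (hindep : ZPowIndependent e) :
    ZPowIndependent fun i : Fin n => (e i.castSucc : G ⧸ Subgroup.zpowers (e (Fin.last n))) := by
  intro k hk i
  rw [← QuotientGroup.mk_zpow, hindep.zpow_eq_one_of_prod_mem_zpowers_last _ i,
    QuotientGroup.mk_one]
  rwa [← QuotientGroup.eq_one_iff, QuotientGroup.mk_prod]

theorem ZPowIndependent.orderOf_mk_castSucc (hindep : ZPowIndependent e) (i : Fin n) :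
    orderOf (e i.castSucc : G ⧸ Subgroup.zpowers (e (Fin.last n))) = orderOf (e i.castSucc) := by
  refine orderOf_eq_orderOf_iff.mpr fun t => ⟨fun ht => ?_, fun ht => ?_⟩
  · simpa using hindep.zpow_eq_one_of_prod_mem_zpowers_last (k := Pi.single i (t : ℤ))
      (by simpa [Pi.single_apply, ← QuotientGroup.eq_one_iff] using ht) i
  · rw [← QuotientGroup.mk_pow, ht, QuotientGroup.mk_one]

end Independence

variable {ι : Type*} (e : ι → G) (d : ι → G → A)

def OrbitSumsVanish : Prop :=
  ∀ i g, ∑ k ∈ range (orderOf (e i)), d i (g * e i ^ k) = 0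

def IsCurlFree : Prop :=
  ∀ i j g, d i (g * e j) - d i g = d j (g * e i) - d j g

variable {e d}

theorem OrbitSumsVanish.sub_diff (hd : OrbitSumsVanish e d) (b : G → A) :
    OrbitSumsVanish e fun i g => d i g - (b (g * e i) - b g) := by
  intro i g
  have htelescope : ∑ k ∈ range (orderOf (e i)), (b (g * e i ^ k * e i) - b (g * e i ^ k)) = 0 := by
    simp only [mul_assoc, ← pow_succ]
    rw [Finset.sum_range_sub (fun k => b (g * e i ^ k)), pow_orderOf_eq_one, pow_zero, sub_self]
  rw [Finset.sum_sub_distrib, hd, htelescope, sub_zero]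

theorem IsCurlFree.sub_diff (hd : IsCurlFree e d) (b : G → A) :
    IsCurlFree e fun i g => d i g - (b (g * e i) - b g) := by
  intro i j g
  simp only [mul_right_comm g (e j) (e i)]
  linear_combination (norm := abel) hd i j g

variable {n : ℕ} {e : Fin (n + 1) → G} {d : Fin (n + 1) → G → A}

theorem OrbitSumsVanish.descend (hd : OrbitSumsVanish e d) (hindep : ZPowIndependent e)
    (he : IsOfFinOrder (e (Fin.last n))) (hinv : ∀ i g, d i (g * e (Fin.last n)) = d i g) :
    OrbitSumsVanish (fun i : Fin n => (e i.castSucc : G ⧸ Subgroup.zpowers (e (Fin.last n))))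
      fun i q => d i.castSucc q.out := by
  intro i q
  induction q using QuotientGroup.induction_on with | H g => ?_
  simp only [hindep.orderOf_mk_castSucc, ← QuotientGroup.mk_pow, ← QuotientGroup.mk_mul,
    apply_out_eq_of_apply_mul_eq he (hinv _)]
  exact hd _ g

theorem IsCurlFree.descend (hd : IsCurlFree e d) (he : IsOfFinOrder (e (Fin.last n)))
    (hinv : ∀ i g, d i (g * e (Fin.last n)) = d i g) :
    IsCurlFree (fun i : Fin n => (e i.castSucc : G ⧸ Subgroup.zpowers (e (Fin.last n))))
      fun i q => d i.castSucc q.out := by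
  intro i j q
  induction q using QuotientGroup.induction_on with | H g => ?_
  simp only [← QuotientGroup.mk_mul, apply_out_eq_of_apply_mul_eq he (hinv _)]
  exact hd _ _ g

theorem exists_forall_sub_eq_of_isCurlFree {n : ℕ} {e : Fin n → G} {d : Fin n → G → A}
    (he : ∀ i, IsOfFinOrder (e i)) (hindep : ZPowIndependent e) (hd : OrbitSumsVanish e d)
    (hcurl : IsCurlFree e d) : ∃ b : G → A, ∀ i g, d i g = b (g * e i) - b g := by
  induction n generalizing G with
  | zero => exact ⟨0, fun i => i.elim0⟩
  | succ n ih =>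
    obtain ⟨b₀, hb₀⟩ := exists_sub_eq_of_sum_orbit_eq_zero (he (Fin.last n)) (hd (Fin.last n))
    set d' : Fin (n + 1) → G → A := fun i g => d i g - (b₀ (g * e i) - b₀ g)
    have hcurl' : IsCurlFree e d' := hcurl.sub_diff b₀
    have hinv : ∀ i g, d' i (g * e (Fin.last n)) = d' i g := fun i g => by
      simpa [d', ← hb₀, sub_eq_zero] using hcurl' i (Fin.last n) g
    obtain ⟨b₁, hb₁⟩ := ih (fun i => (QuotientGroup.mk' _).isOfFinOrder (he i.castSucc))
      hindep.mk_castSucc ((hd.sub_diff b₀).descend hindep (he _) hinv)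
      (hcurl'.descend (he _) hinv)
    refine ⟨fun g => b₁ g + b₀ g, Fin.lastCases (fun g => ?_) fun i g => ?_⟩
    · beta_reduce
      rw [QuotientGroup.mk_mul_of_mem g (Subgroup.mem_zpowers _), hb₀]
      abel
    · have hi : d' i.castSucc g = b₁ (g * e i.castSucc : G) - b₁ g := by
        rw [← apply_out_eq_of_apply_mul_eq (he _) (hinv _), QuotientGroup.mk_mul]
        exact hb₁ i g
      simp only [d'] at hi
      beta_reduce
      linear_combination (norm := abel) hi

end Potentials

section GroupRing

variable {G : Type} [CommGroup G]

theorem coeff_toQ (z : ZG G) (g : G) : (toQ G z).coeff g = z.coeff g := by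
  have : toQ G = (mapRingHom G (Int.castRingHom ℚ)).toIntAlgHom :=
    MonoidAlgebra.algHom_ext (fun g => by
      change _ = mapRingHom G _ (single g 1)
      simp [toQ, mapRingHom_single]) (Subsingleton.elim _ _)
  rw [this]
  exact coeff_mapRingHom _ z g

theorem memZG_iff_forall_coeff_eq_zero (x : QG G) :
    MemZG G x ↔ ∀ g, (x.coeff g : AddCircle (1 : ℚ)) = 0 := by
  simp only [AddCircle.coe_eq_zero_iff, zsmul_one]
  constructor
  · rintro ⟨z, rfl⟩ g
    exact ⟨z.coeff g, (coeff_toQ z g).symm⟩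
  · intro h
    refine ⟨ofCoeff (x.coeff.mapRange (⌊·⌋) (by simp)), MonoidAlgebra.ext (Finsupp.ext fun g => ?_)⟩
    obtain ⟨k, hk⟩ := h g
    simp [coeff_toQ, ← hk]

theorem exists_coeff_eq [Finite G] (f : G → AddCircle (1 : ℚ)) :
    ∃ x : QG G, ∀ g, (x.coeff g : AddCircle (1 : ℚ)) = f g :=
  ⟨ofCoeff (Finsupp.equivFunOnFinite.symm fun g => (f g).out), fun g => by simp⟩

theorem coeff_mul_one_sub_of (s : QG G) (p u : G) :
    (s * (1 - of ℚ G p)).coeff u = s.coeff u - s.coeff (u * p⁻¹) := by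
  simp [mul_sub]

theorem coeff_mul_toQ_sum_pow (s : QG G) (p : G) (N : ℕ) (w : G) :
    (s * toQ G (∑ k ∈ range N, of ℤ G p ^ k)).coeff w = ∑ k ∈ range N, s.coeff (w * p⁻¹ ^ k) := by
  simp [toQ, Finset.mul_sum, coeff_sum]

end GroupRing

section Generators

variable {n : ℕ} (m : Fin n → ℕ)

theorem orderOf_pgen (i : Fin n) : orderOf (pgen m i) = m i := by
  rw [pgen, orderOf_piMulSingle, orderOf_ofAdd_eq_addOrderOf, ZMod.addOrderOf_one]

theorem zpowIndependent_pgen : ZPowIndependent (pgen m) := by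
  intro k hk i
  simp only [pgen, ← Pi.mulSingle_zpow, Finset.univ_prod_mulSingle] at hk ⊢
  rw [congrFun hk i, Pi.one_apply, Pi.mulSingle_one]

end Generators

theorem statement6_general
    (n : ℕ) (m : Fin n → ℕ) [∀ i, NeZero (m i)]
    (r : Fin n → QG (Gr m))
    (h1 : ∀ i, MemZG (Gr m) (r i * toQ (Gr m) (Pel m i)))
    (h2 : ∀ i j, MemZG (Gr m)
      (r i * (1 - MonoidAlgebra.of ℚ (Gr m) (pgen m j))
        - r j * (1 - MonoidAlgebra.of ℚ (Gr m) (pgen m i)))) :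
    ∃ x : QG (Gr m), ∀ i,
      MemZG (Gr m) (r i - x * (1 - MonoidAlgebra.of ℚ (Gr m) (pgen m i))) := by
  have hsum : OrbitSumsVanish (fun i => (pgen m i)⁻¹)
      fun i g => ((r i).coeff g : AddCircle (1 : ℚ)) := fun i g => by
    have := (memZG_iff_forall_coeff_eq_zero _).mp (h1 i) g
    rwa [Pel, coeff_mul_toQ_sum_pow, QuotientAddGroup.mk_sum, ← orderOf_pgen m i,
      ← orderOf_inv] at this
  have hcurl : IsCurlFree (fun i => (pgen m i)⁻¹)
      fun i g => ((r i).coeff g : AddCircle (1 : ℚ)) := fun i j g => by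
    have := (memZG_iff_forall_coeff_eq_zero _).mp (h2 i j) g
    rw [coeff_sub, Finsupp.sub_apply, coeff_mul_one_sub_of, coeff_mul_one_sub_of] at this
    rw [eq_comm, ← sub_eq_zero, ← this]
    simp only [AddCircle.coe_sub]
    abel
  obtain ⟨b, hb⟩ := exists_forall_sub_eq_of_isCurlFree (fun i => isOfFinOrder_of_finite _)
    (zpowIndependent_pgen m).inv hsum hcurl
  obtain ⟨x, hx⟩ := exists_coeff_eq fun g => -b g
  refine ⟨x, fun i => (memZG_iff_forall_coeff_eq_zero _).mpr fun w => ?_⟩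
  rw [coeff_sub, Finsupp.sub_apply, coeff_mul_one_sub_of]
  simp only [AddCircle.coe_sub, hx, hb i w]
  abel

/-- Lemma 2.3 (solution): if r₁, …, rₙ ∈ ℚ[G] satisfy rᵢPᵢ ∈ ℤ[G] for all i and
rᵢ(e − pⱼ) − rⱼ(e − pᵢ) ∈ ℤ[G] for all i, j, then there is x ∈ ℚ[G] with
rᵢ − x(e − pᵢ) ∈ ℤ[G] for all i. -/
theorem statement6
    (n : ℕ) (hn : 1 ≤ n) (m : Fin n → ℕ) [∀ i, NeZero (m i)]
    (r : Fin n → QG (Gr m))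
    (h1 : ∀ i, MemZG (Gr m) (r i * toQ (Gr m) (Pel m i)))
    (h2 : ∀ i j, MemZG (Gr m)
      (r i * (1 - MonoidAlgebra.of ℚ (Gr m) (pgen m j))
        - r j * (1 - MonoidAlgebra.of ℚ (Gr m) (pgen m i)))) :
    ∃ x : QG (Gr m), ∀ i,
      MemZG (Gr m) (r i - x * (1 - MonoidAlgebra.of ℚ (Gr m) (pgen m i))) :=
  statement6_general n m r h1 h2
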